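/- arXiv:1411.4190 — 5 statements merged into one kernel-verified Lean document; each statement's English description precedes it below -/
import Mathlib

section
/- Let G be a group such that (i) every injective group endomorphism of G is surjective (G is co-hopfian), (ii) the automorphism group of G is abelian, and (iii) every endomorphism φ of G that is not an automorphism has image contained in the center Z(G) and inverts only the identity, i.e. φ(x) = x⁻¹ implies x = 1. Then the endomorphism monoid End(G) is commutative, i.e. φ ∘ ψ = ψ ∘ φ for all endomorphisms φ, ψ of G. -/
/-!
If `φ` is not an automorphism, its image is central, so `x ↦ φ x * x` is again an endomorphism;
since `φ` inverts only the identity it is injective, hence an automorphism because `G` is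
co-hopfian. Commuting with `x ↦ φ x * x` is the same as commuting with `φ`, so every endomorphism
can be replaced by an automorphism without changing what it commutes with, and automorphisms
commute by assumption.
-/

namespace MonoidHom

variable {G : Type*} [Group G]

def mulId (φ : G →* G) (hφ : ∀ x, φ x ∈ Subgroup.center G) : G →* G where
  toFun x := φ x * x
  map_one' := by simp
  map_mul' x y := by
    simp only [map_mul, mul_assoc]
    rw [← mul_assoc x, Subgroup.mem_center_iff.mp (hφ y) x, mul_assoc]

@[simp]
lemma mulId_apply (φ : G →* G) (hφ : ∀ x, φ x ∈ Subgroup.center G) (x : G) :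
    φ.mulId hφ x = φ x * x :=
  rfl

lemma injective_mulId (φ : G →* G) (hφ : ∀ x, φ x ∈ Subgroup.center G)
    (hinv : ∀ x, φ x = x⁻¹ → x = 1) : Function.Injective (φ.mulId hφ) :=
  (injective_iff_map_eq_one _).mpr fun x hx => hinv x (eq_inv_of_mul_eq_one_left hx)

lemma comp_comm_of_mulId_comp_comm (φ ψ : G →* G) (hφ : ∀ x, φ x ∈ Subgroup.center G)
    (h : (φ.mulId hφ).comp ψ = ψ.comp (φ.mulId hφ)) : φ.comp ψ = ψ.comp φ := by
  ext x
  have hx : φ (ψ x) * ψ x = ψ (φ x) * ψ x := by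
    simpa using DFunLike.congr_fun h x
  exact mul_right_cancel hx

lemma comp_comm_of_bijective (haut : ∀ α β : MulAut G, α * β = β * α) {φ ψ : G →* G}
    (hφ : Function.Bijective φ) (hψ : Function.Bijective ψ) : φ.comp ψ = ψ.comp φ := by
  ext x
  exact DFunLike.congr_fun (haut (MulEquiv.ofBijective φ hφ) (MulEquiv.ofBijective ψ hψ)) x

lemma exists_bijective_comp_comm_imp
    (hco : ∀ φ : G →* G, Function.Injective φ → Function.Surjective φ)
    (hend : ∀ φ : G →* G, ¬ Function.Bijective φ →
      (∀ x : G, φ x ∈ Subgroup.center G) ∧ (∀ x : G, φ x = x⁻¹ → x = 1))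
    (φ : G →* G) :
    ∃ φ' : G →* G, Function.Bijective φ' ∧
      ∀ ψ : G →* G, φ'.comp ψ = ψ.comp φ' → φ.comp ψ = ψ.comp φ := by
  by_cases hφ : Function.Bijective φ
  · exact ⟨φ, hφ, fun _ h => h⟩
  · obtain ⟨hcen, hinv⟩ := hend φ hφ
    have hinj := φ.injective_mulId hcen hinv
    exact ⟨φ.mulId hcen, ⟨hinj, hco _ hinj⟩,
      fun ψ => comp_comm_of_mulId_comp_comm φ ψ hcen⟩

end MonoidHom

theorem stmt_0 (G : Type*) [Group G]
    (hco : ∀ φ : G →* G, Function.Injective φ → Function.Surjective φ)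
    (haut : ∀ α β : MulAut G, α * β = β * α)
    (hend : ∀ φ : G →* G, ¬ Function.Bijective φ →
      (∀ x : G, φ x ∈ Subgroup.center G) ∧ (∀ x : G, φ x = x⁻¹ → x = 1)) :
    ∀ φ ψ : G →* G, φ.comp ψ = ψ.comp φ := by
  intro φ ψ
  obtain ⟨φ', hφ'bij, hφ'⟩ := MonoidHom.exists_bijective_comp_comm_imp hco hend φ
  obtain ⟨ψ', hψ'bij, hψ'⟩ := MonoidHom.exists_bijective_comp_comm_imp hco hend ψ
  refine hφ' ψ (hψ' φ' ?_).symm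
  exact MonoidHom.comp_comm_of_bijective haut hψ'bij hφ'bij
end

section
/- Let G be a co-hopfian group (every injective group endomorphism of G is surjective). Then Aut(G) is abelian if and only if both of the following hold: (a) every automorphism α of G is central, i.e. α(x)·x⁻¹ ∈ Z(G) for all x ∈ G; and (b) any two endomorphisms f, g of G whose images are contained in Z(G) and which invert only the identity (f(x) = x⁻¹ implies x = 1, and likewise for g) commute under composition: f ∘ g = g ∘ f. -/
/-!
A central endomorphism `f` (image in `Z(G)`) gives an endomorphism `x ↦ f x * x`, injective iff
`f` inverts only `1`, and every central automorphism `α` arises this way from `x ↦ α x * x⁻¹`.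
Since `f x` and `g x` commute, composing the maps of `f` and `g` gives
`x ↦ f (g x) * (f x * g x * x)`, so they commute iff `f` and `g` do. In a co-hopfian group each
such map is an automorphism, which makes (b) equivalent to Aut(G) being abelian once (a) holds;
and (a) holds when Aut(G) is abelian, since `α` commuting with conjugation by `x` puts
`α x * x⁻¹` in the centre.
-/

open Subgroup

namespace MonoidHom

variable {G : Type*} [Group G]

@[simps]
def mulSelf (f : G →* G) (hf : ∀ x, f x ∈ center G) : G →* G where
  toFun x := f x * x
  map_one' := by simp
  map_mul' a b := by
    rw [map_mul, mul_assoc, mul_assoc, ← mul_assoc a, mem_center_iff.mp (hf b) a, mul_assoc]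

@[simps]
def divSelf (φ : G →* G) (hφ : ∀ x, φ x * x⁻¹ ∈ center G) : G →* G where
  toFun x := φ x * x⁻¹
  map_one' := by simp
  map_mul' a b := by
    have hb : a * (φ b * b⁻¹) = φ b * b⁻¹ * a := mem_center_iff.mp (hφ b) a
    calc φ (a * b) * (a * b)⁻¹ = φ a * a⁻¹ * (a * (φ b * b⁻¹)) * a⁻¹ := by rw [map_mul]; group
      _ = φ a * a⁻¹ * (φ b * b⁻¹) := by rw [hb]; group

variable {f g : G →* G} (hf : ∀ x, f x ∈ center G) (hg : ∀ x, g x ∈ center G)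

theorem mulSelf_injective (hf₁ : ∀ x, f x = x⁻¹ → x = 1) : Function.Injective (mulSelf f hf) :=
  (injective_iff_map_eq_one _).2 fun x hx => hf₁ x (eq_inv_of_mul_eq_one_left hx)

theorem mulSelf_mulSelf_apply (x : G) :
    mulSelf f hf (mulSelf g hg x) = f (g x) * (f x * g x * x) := by
  rw [mulSelf_apply, mulSelf_apply, map_mul]
  simp only [mul_assoc]

theorem mulSelf_comp_comm_iff :
    (mulSelf f hf).comp (mulSelf g hg) = (mulSelf g hg).comp (mulSelf f hf) ↔
      f.comp g = g.comp f := by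
  simp only [MonoidHom.ext_iff, comp_apply, mulSelf_mulSelf_apply]
  refine forall_congr' fun x => ?_
  rw [mem_center_iff.mp (hg x) (f x), mul_left_inj]

theorem divSelf_apply_mem_center {φ : G →* G} (hφ : ∀ x, φ x * x⁻¹ ∈ center G) (x : G) :
    divSelf φ hφ x ∈ center G :=
  hφ x

theorem mulSelf_divSelf (φ : G →* G) (hφ : ∀ x, φ x * x⁻¹ ∈ center G) :
    mulSelf (divSelf φ hφ) (divSelf_apply_mem_center hφ) = φ := by
  ext x
  exact inv_mul_cancel_right (φ x) x

theorem eq_one_of_divSelf_apply_eq_inv {φ : G →* G} (hφ : ∀ x, φ x * x⁻¹ ∈ center G)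
    (hinj : Function.Injective φ) (x : G) (hx : divSelf φ hφ x = x⁻¹) : x = 1 :=
  hinj <| (mul_eq_right.mp hx).trans φ.map_one.symm

end MonoidHom

open MonoidHom

theorem MulAut.mul_inv_mem_center_of_commute_conj {G : Type*} [Group G] (α : MulAut G) (x : G)
    (h : α * MulAut.conj x = MulAut.conj x * α) : α x * x⁻¹ ∈ center G := by
  refine mem_center_iff.mpr fun z => ?_
  have hz : α x * (x⁻¹ * z * x) * (α x)⁻¹ = z := by
    have := DFunLike.congr_fun h (α.symm (x⁻¹ * z * x))
    rw [MulAut.mul_apply, MulAut.mul_apply, MulAut.conj_apply, MulAut.conj_apply, map_mul,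
      map_mul, map_inv, MulEquiv.apply_symm_apply] at this
    rw [this]
    group
  conv_lhs => rw [← hz]
  group

theorem stmt_1 (G : Type*) [Group G]
    (hco : ∀ φ : G →* G, Function.Injective φ → Function.Surjective φ) :
    (∀ α β : MulAut G, α * β = β * α) ↔
      ((∀ (α : MulAut G) (x : G), α x * x⁻¹ ∈ Subgroup.center G) ∧
       (∀ f g : G →* G,
          (∀ x : G, f x ∈ Subgroup.center G) → (∀ x : G, f x = x⁻¹ → x = 1) →
          (∀ x : G, g x ∈ Subgroup.center G) → (∀ x : G, g x = x⁻¹ → x = 1) →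
          f.comp g = g.comp f)) := by
  refine ⟨fun hcomm => ⟨fun α x => α.mul_inv_mem_center_of_commute_conj x (hcomm _ _), ?_⟩, ?_⟩
  · intro f g hf hf₁ hg hg₁
    have hF := mulSelf_injective hf hf₁
    have hG := mulSelf_injective hg hg₁
    have h := hcomm (.ofBijective _ ⟨hF, hco _ hF⟩) (.ofBijective _ ⟨hG, hco _ hG⟩)
    rw [← mulSelf_comp_comm_iff hf hg]
    ext x
    exact DFunLike.congr_fun h x
  · rintro ⟨hcentral, hcomm⟩ α β
    have hα : ∀ x, (α : G →* G) x * x⁻¹ ∈ center G := hcentral α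
    have hβ : ∀ x, (β : G →* G) x * x⁻¹ ∈ center G := hcentral β
    have h := (mulSelf_comp_comm_iff (divSelf_apply_mem_center hα)
      (divSelf_apply_mem_center hβ)).mpr <|
        hcomm _ _ (divSelf_apply_mem_center hα) (eq_one_of_divSelf_apply_eq_inv hα α.injective)
          (divSelf_apply_mem_center hβ) (eq_one_of_divSelf_apply_eq_inv hβ β.injective)
    rw [mulSelf_divSelf, mulSelf_divSelf] at h
    ext x
    exact DFunLike.congr_fun h x
end

section
/- For every prime p and every admissible pair λ ∈ {(1,0)} ∪ {(i,1) : 0 ≤ i ≤ p−1}, the JK-group G = G_λ^(p) is a finite group of order p^8; its center Z(G) equals its commutator subgroup [G,G]; Z(G) has order p^4 and exponent p (z^p = 1 for all z ∈ Z(G)); and g^p ∈ Z(G) for every g ∈ G, so that the quotient G/Z(G) is elementary abelian of order p^4. -/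
/-!
The relators make every commutator of two generators central, so `G` has class two and `[G,G]`
is generated by the four commutators `[aᵢ,bⱼ]`; these have order dividing `p` because
`[aᵢ,bⱼ]^p = [aᵢ^p,bⱼ]` and `aᵢ^p` is central. Likewise `G/[G,G]` is generated by four elements
of order dividing `p`, so `|G| ≤ p⁸`. Conversely `G` maps onto an explicit central extension of
`(ℤ/p)⁴` by `(ℤ/p)⁴` of order `p⁸`, whose cocycle is a bilinear commutator pairing plus the carries
of `ℤ/p²` that produce the `p`-th powers. Hence this map is an isomorphism, both factors have order
`p⁴`, and the nondegeneracy of the pairing in the model gives `Z(G) ≤ [G,G]`.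
-/

def gcomm {G : Type*} [Group G] (x y : G) : G := x⁻¹ * y⁻¹ * x * y

def jkRels (p : ℕ) (lam : ℕ × ℕ) : Set (FreeGroup (Fin 4)) :=
  {r | ∃ i j k : Fin 4,
      r = gcomm (gcomm (FreeGroup.of i) (FreeGroup.of j)) (FreeGroup.of k)} ∪
  {FreeGroup.of 0 ^ p * (gcomm (FreeGroup.of 0) (FreeGroup.of 2))⁻¹,
   FreeGroup.of 1 ^ p *
     (gcomm (FreeGroup.of 0) (FreeGroup.of 2 ^ lam.1 * FreeGroup.of 3 ^ lam.2))⁻¹,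
   FreeGroup.of 2 ^ p * (gcomm (FreeGroup.of 1) (FreeGroup.of 2 * FreeGroup.of 3))⁻¹,
   FreeGroup.of 3 ^ p * (gcomm (FreeGroup.of 1) (FreeGroup.of 3))⁻¹,
   gcomm (FreeGroup.of 0) (FreeGroup.of 1),
   gcomm (FreeGroup.of 2) (FreeGroup.of 3)}

abbrev JKGroup (p : ℕ) (lam : ℕ × ℕ) : Type := PresentedGroup (jkRels p lam)

def jka₁ (p : ℕ) (lam : ℕ × ℕ) : JKGroup p lam := PresentedGroup.of 0
def jka₂ (p : ℕ) (lam : ℕ × ℕ) : JKGroup p lam := PresentedGroup.of 1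
def jkb₁ (p : ℕ) (lam : ℕ × ℕ) : JKGroup p lam := PresentedGroup.of 2
def jkb₂ (p : ℕ) (lam : ℕ × ℕ) : JKGroup p lam := PresentedGroup.of 3

section GroupLemmas

open Subgroup
open scoped commutatorElement

variable {G : Type*} [Group G]

theorem gcomm_eq_of_mul_eq {x y c : G} (h : x * y = y * x * c) : gcomm x y = c := by
  rw [gcomm, mul_assoc, h]; group

theorem gcomm_eq_one_iff {x y : G} : gcomm x y = 1 ↔ Commute x y := by
  rw [show gcomm x y = (y * x)⁻¹ * (x * y) by simp [gcomm, mul_assoc], inv_mul_eq_one, eq_comm]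
  rfl

theorem map_gcomm {H : Type*} [Group H] (f : G →* H) (x y : G) :
    f (gcomm x y) = gcomm (f x) (f y) := by
  simp [gcomm]

theorem gcomm_mem {H : Subgroup G} {x y : G} (hx : x ∈ H) (hy : y ∈ H) : gcomm x y ∈ H :=
  mul_mem (mul_mem (mul_mem (inv_mem hx) (inv_mem hy)) hx) hy

theorem gcomm_self (x : G) : gcomm x x = 1 := by
  simp [gcomm]

theorem gcomm_swap (x y : G) : gcomm y x = (gcomm x y)⁻¹ := by
  simp [gcomm, mul_assoc]

theorem gcomm_eq_commutatorElement (x y : G) : gcomm x y = ⁅x⁻¹, y⁻¹⁆ := by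
  simp [gcomm, commutatorElement_def]

theorem gcomm_mem_commutator (x y : G) : gcomm x y ∈ commutator G := by
  rw [commutator_def, gcomm_eq_commutatorElement]
  exact commutator_mem_commutator (mem_top _) (mem_top _)

theorem gcomm_eq_one_of_mem_center {z : G} (hz : z ∈ center G) (y : G) : gcomm z y = 1 :=
  gcomm_eq_one_iff.2 (mem_center_iff.1 hz y).symm

theorem gcomm_pow_left {x y : G} (h : gcomm x y ∈ center G) (n : ℕ) :
    gcomm (x ^ n) y = gcomm x y ^ n := by
  induction n with
  | zero => simp [gcomm]
  | succ n ih =>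
    have hsplit : gcomm (x ^ n * x) y = x⁻¹ * gcomm (x ^ n) y * x * gcomm x y := by
      simp only [gcomm]; group
    rw [pow_succ, hsplit, ih, mul_assoc x⁻¹, ← mem_center_iff.1 (pow_mem h n), inv_mul_cancel_left,
      pow_succ]

theorem commute_of_closure_eq_top {s : Set G} (hs : closure s = ⊤)
    (hcomm : ∀ x ∈ s, ∀ y ∈ s, Commute x y) (g h : G) : Commute g h := by
  have hh : h ∈ centralizer s :=
    (closure_le _).2 (fun x hx => mem_centralizer_iff.2 fun y hy => (hcomm y hy x hx).eq)
      (hs ▸ mem_top h)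
  exact (mem_centralizer_iff.1 (closure_le_centralizer_centralizer s (hs ▸ mem_top g)) h hh).symm

theorem mem_center_of_commute_of_closure_eq_top {s : Set G} (hs : closure s = ⊤) {z : G}
    (hz : ∀ x ∈ s, Commute x z) : z ∈ center G := by
  rw [← centralizer_univ, ← coe_top, ← hs, centralizer_closure]
  exact mem_centralizer_iff.2 fun x hx => (hz x hx).eq

theorem Subgroup.normal_of_le_center {N : Subgroup G} (h : N ≤ center G) : N.Normal :=
  ⟨fun n hn g => by rwa [mem_center_iff.1 (h hn) g, mul_inv_cancel_right]⟩

theorem commutator_le_of_gcomm_mem {N : Subgroup G} [N.Normal] {s : Set G} (hs : closure s = ⊤)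
    (h : ∀ x ∈ s, ∀ y ∈ s, gcomm x y ∈ N) : commutator G ≤ N := by
  have hs' : closure (QuotientGroup.mk' N '' s) = ⊤ := by
    rw [← MonoidHom.map_closure, hs, map_top_of_surjective _ (QuotientGroup.mk'_surjective N)]
  have hcomm := commute_of_closure_eq_top hs' <| by
    rintro _ ⟨x, hx, rfl⟩ _ ⟨y, hy, rfl⟩
    rw [← gcomm_eq_one_iff, ← map_gcomm, QuotientGroup.mk'_apply, QuotientGroup.eq_one_iff]
    exact h x hx y hy
  rw [commutator_def, commutator_le]
  intro g _ g' _
  rw [← inv_inv g, ← inv_inv g', ← gcomm_eq_commutatorElement, ← QuotientGroup.eq_one_iff,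
    ← QuotientGroup.mk'_apply, map_gcomm, gcomm_eq_one_iff]
  exact hcomm _ _

theorem QuotientGroup.mul_comm_of_commutator_le {N : Subgroup G} [N.Normal]
    (h : commutator G ≤ N) (x y : G ⧸ N) : x * y = y * x := by
  induction x using QuotientGroup.induction_on with | _ a =>
  induction y using QuotientGroup.induction_on with | _ b =>
  rw [← QuotientGroup.mk_mul, ← QuotientGroup.mk_mul, QuotientGroup.eq,
    show (a * b)⁻¹ * (b * a) = gcomm b a by simp [gcomm, mul_assoc]]
  exact h (gcomm_mem_commutator b a)

theorem QuotientGroup.pow_eq_one_of_forall_pow_mem {N : Subgroup G} [N.Normal] {n : ℕ}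
    (h : ∀ g : G, g ^ n ∈ N) (x : G ⧸ N) : x ^ n = 1 := by
  induction x using QuotientGroup.induction_on with | _ g =>
  rw [← QuotientGroup.mk_pow, QuotientGroup.eq_one_iff]
  exact h g

theorem center_le_commutator_of_bijective {H : Type*} [Group H] {f : G →* H}
    (hf : Function.Bijective f) (h : center H ≤ commutator H) : center G ≤ commutator G := by
  intro z hz
  have hfz : f z ∈ center H := mem_center_iff.2 fun y => by
    obtain ⟨g, rfl⟩ := hf.2 y
    rw [← map_mul, ← map_mul, mem_center_iff.1 hz g]
  have hmap : f z ∈ (commutator G).map f := by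
    rw [commutator_def, map_commutator, map_top_of_surjective f hf.2, ← commutator_def]
    exact h hfz
  obtain ⟨w, hw, hwz⟩ := hmap
  exact hf.1 hwz ▸ hw

end GroupLemmas

section CommutingFamily

open Subgroup

variable {G : Type*} [Group G] {ι : Type*} {f : ι → G}

theorem pairwise_commute_zpowers (hcomm : ∀ i j, Commute (f i) (f j)) :
    Pairwise fun i j => ∀ x y : G, x ∈ zpowers (f i) → y ∈ zpowers (f j) → Commute x y := by
  intro i j _ x y hx hy
  obtain ⟨k, rfl⟩ := mem_zpowers_iff.1 hx
  obtain ⟨l, rfl⟩ := mem_zpowers_iff.1 hy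
  exact (hcomm i j).zpow_zpow k l

variable [Fintype ι] (hcomm : ∀ i j, Commute (f i) (f j))
include hcomm

theorem range_noncommPiCoprod_zpowers :
    (noncommPiCoprod (pairwise_commute_zpowers hcomm)).range = closure (Set.range f) := by
  rw [noncommPiCoprod_range]
  simp only [zpowers_eq_closure, ← Subgroup.closure_iUnion, Set.iUnion_singleton_eq_range]

theorem finite_and_card_closure_range_le {n : ℕ} (hn : n ≠ 0) (hf : ∀ i, f i ^ n = 1) :
    Finite (closure (Set.range f)) ∧ Nat.card (closure (Set.range f)) ≤ n ^ Fintype.card ι := by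
  have hord : ∀ i, orderOf (f i) ≤ n := fun i =>
    orderOf_le_of_pow_eq_one (Nat.pos_of_ne_zero hn) (hf i)
  have : ∀ i, Finite (zpowers (f i)) := fun i =>
    (finite_zpowers.2 (isOfFinOrder_iff_pow_eq_one.2 ⟨n, Nat.pos_of_ne_zero hn, hf i⟩)).to_subtype
  have hsurj := (noncommPiCoprod (pairwise_commute_zpowers hcomm)).rangeRestrict_surjective
  rw [← range_noncommPiCoprod_zpowers hcomm]
  refine ⟨Finite.of_surjective _ hsurj, ?_⟩
  calc Nat.card _ ≤ Nat.card (∀ i, zpowers (f i)) := Nat.card_le_card_of_surjective _ hsurj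
    _ = ∏ i, orderOf (f i) := by simp [Nat.card_pi, Nat.card_zpowers]
    _ ≤ ∏ _i : ι, n := Finset.prod_le_prod' fun i _ => hord i
    _ = n ^ Fintype.card ι := by simp

theorem pow_eq_one_of_mem_closure_range {n : ℕ} (hf : ∀ i, f i ^ n = 1) {z : G}
    (hz : z ∈ closure (Set.range f)) : z ^ n = 1 := by
  rw [← range_noncommPiCoprod_zpowers hcomm] at hz
  obtain ⟨x, rfl⟩ := hz
  have hx : x ^ n = 1 := funext fun i => Subtype.ext <| by
    obtain ⟨k, hk⟩ := mem_zpowers_iff.1 (x i).2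
    rw [Pi.pow_apply, SubgroupClass.coe_pow, ← hk, ← zpow_natCast, ← zpow_mul, mul_comm, zpow_mul,
      zpow_natCast, hf i, one_zpow]
    rfl
  rw [← map_pow, hx, map_one]

end CommutingFamily

namespace JKGroup

open Subgroup

variable (p : ℕ) (lam : ℕ × ℕ)

abbrev gen (i : Fin 4) : JKGroup p lam := PresentedGroup.of i

theorem closure_range_gen : closure (Set.range (gen p lam)) = ⊤ :=
  PresentedGroup.closure_range_of _

theorem mk_of (i : Fin 4) : PresentedGroup.mk (jkRels p lam) (FreeGroup.of i) = gen p lam i := rfl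

theorem gcomm_gcomm_gen (i j k : Fin 4) :
    gcomm (gcomm (gen p lam i) (gen p lam j)) (gen p lam k) = 1 := by
  simpa [map_gcomm, mk_of] using
    PresentedGroup.one_of_mem (rels := jkRels p lam) (Or.inl ⟨i, j, k, rfl⟩)

theorem gcomm_gen_zero_one : gcomm (gen p lam 0) (gen p lam 1) = 1 := by
  simpa [map_gcomm, mk_of] using PresentedGroup.one_of_mem (rels := jkRels p lam)
    (x := gcomm (.of 0) (.of 1)) (Or.inr (by simp))

theorem gcomm_gen_two_three : gcomm (gen p lam 2) (gen p lam 3) = 1 := by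
  simpa [map_gcomm, mk_of] using PresentedGroup.one_of_mem (rels := jkRels p lam)
    (x := gcomm (.of 2) (.of 3)) (Or.inr (by simp))

theorem gen_pow_mem_commutator_of_mem {i : Fin 4} {u v : FreeGroup (Fin 4)}
    (h : .of i ^ p * (gcomm u v)⁻¹ ∈ jkRels p lam) :
    gen p lam i ^ p ∈ commutator (JKGroup p lam) := by
  have h := PresentedGroup.one_of_mem h
  simp only [map_mul, map_pow, map_inv, map_gcomm, mk_of, mul_inv_eq_one] at h
  rw [h]
  exact gcomm_mem_commutator _ _

theorem gen_pow_mem_commutator (i : Fin 4) : gen p lam i ^ p ∈ commutator (JKGroup p lam) := by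
  fin_cases i
  · exact gen_pow_mem_commutator_of_mem p lam (u := .of 0) (v := .of 2) (Or.inr (by simp))
  · exact gen_pow_mem_commutator_of_mem p lam (u := .of 0) (v := .of 2 ^ lam.1 * .of 3 ^ lam.2)
      (Or.inr (by simp))
  · exact gen_pow_mem_commutator_of_mem p lam (u := .of 1) (v := .of 2 * .of 3) (Or.inr (by simp))
  · exact gen_pow_mem_commutator_of_mem p lam (u := .of 1) (v := .of 3) (Or.inr (by simp))

theorem gcomm_gen_mem_center (i j : Fin 4) :
    gcomm (gen p lam i) (gen p lam j) ∈ center (JKGroup p lam) :=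
  mem_center_of_commute_of_closure_eq_top (closure_range_gen p lam) <| by
    rintro _ ⟨k, rfl⟩
    exact (gcomm_eq_one_iff.1 (gcomm_gcomm_gen p lam i j k)).symm

/-- The commutators `[a₁,b₁], [a₁,b₂], [a₂,b₁], [a₂,b₂]`. -/
def basicComm : Fin 4 → JKGroup p lam :=
  ![gcomm (gen p lam 0) (gen p lam 2), gcomm (gen p lam 0) (gen p lam 3),
    gcomm (gen p lam 1) (gen p lam 2), gcomm (gen p lam 1) (gen p lam 3)]

theorem basicComm_mem_center (k : Fin 4) : basicComm p lam k ∈ center (JKGroup p lam) := by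
  fin_cases k <;> exact gcomm_gen_mem_center p lam _ _

theorem closure_basicComm_le_center : closure (Set.range (basicComm p lam)) ≤ center _ :=
  (closure_le _).2 <| by rintro _ ⟨k, rfl⟩; exact basicComm_mem_center p lam k

theorem gcomm_gen_mem_closure_basicComm (i j : Fin 4) :
    gcomm (gen p lam i) (gen p lam j) ∈ closure (Set.range (basicComm p lam)) := by
  have hmem : ∀ k, basicComm p lam k ∈ closure (Set.range (basicComm p lam)) :=
    fun k => subset_closure ⟨k, rfl⟩
  have h01 := gcomm_gen_zero_one p lam
  have h23 := gcomm_gen_two_three p lam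
  fin_cases i <;> fin_cases j <;> simp only [Fin.zero_eta, Fin.mk_one, Fin.reduceFinMk]
  all_goals first
    | exact hmem 0 | exact hmem 1 | exact hmem 2 | exact hmem 3
    | (rw [gcomm_swap]; refine inv_mem ?_
       first | exact hmem 0 | exact hmem 1 | exact hmem 2 | exact hmem 3)
    | simp [gcomm_self, h01, h23]
    | simp [gcomm_swap (gen p lam 0), gcomm_swap (gen p lam 2), h01, h23]

theorem commutator_eq_closure_basicComm :
    commutator (JKGroup p lam) = closure (Set.range (basicComm p lam)) := by
  have := normal_of_le_center (closure_basicComm_le_center p lam)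
  refine le_antisymm (commutator_le_of_gcomm_mem (closure_range_gen p lam) ?_) ?_
  · rintro _ ⟨i, rfl⟩ _ ⟨j, rfl⟩
    exact gcomm_gen_mem_closure_basicComm p lam i j
  · rw [closure_le]
    rintro _ ⟨k, rfl⟩
    fin_cases k <;> exact gcomm_mem_commutator _ _

theorem commutator_le_center : commutator (JKGroup p lam) ≤ center _ :=
  commutator_eq_closure_basicComm p lam ▸ closure_basicComm_le_center p lam

theorem basicComm_pow (k : Fin 4) : basicComm p lam k ^ p = 1 := by
  have key : ∀ i j, gcomm (gen p lam i) (gen p lam j) ^ p = 1 := fun i j => by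
    rw [← gcomm_pow_left (gcomm_gen_mem_center p lam i j)]
    exact gcomm_eq_one_of_mem_center (commutator_le_center p lam (gen_pow_mem_commutator p lam i)) _
  fin_cases k <;> exact key _ _

theorem commute_basicComm (k l : Fin 4) : Commute (basicComm p lam k) (basicComm p lam l) :=
  mem_center_iff.1 (basicComm_mem_center p lam l) _

theorem pow_eq_one_of_mem_commutator {z : JKGroup p lam} (hz : z ∈ commutator (JKGroup p lam)) :
    z ^ p = 1 := by
  rw [commutator_eq_closure_basicComm] at hz
  exact pow_eq_one_of_mem_closure_range (commute_basicComm p lam) (basicComm_pow p lam) hz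

theorem finite_and_card_commutator_le [NeZero p] :
    Finite (commutator (JKGroup p lam)) ∧ Nat.card (commutator (JKGroup p lam)) ≤ p ^ 4 := by
  rw [commutator_eq_closure_basicComm]
  exact finite_and_card_closure_range_le (commute_basicComm p lam) (NeZero.ne p)
    (basicComm_pow p lam)

theorem closure_range_mk_gen :
    closure (Set.range fun i => (gen p lam i : JKGroup p lam ⧸ commutator (JKGroup p lam))) =
      ⊤ := by
  rw [show (fun i => (gen p lam i : JKGroup p lam ⧸ commutator (JKGroup p lam))) =
      QuotientGroup.mk' _ ∘ gen p lam from rfl, Set.range_comp, ← MonoidHom.map_closure,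
    closure_range_gen, map_top_of_surjective _ (QuotientGroup.mk'_surjective _)]

theorem pow_mem_commutator (g : JKGroup p lam) : g ^ p ∈ commutator (JKGroup p lam) := by
  rw [← QuotientGroup.eq_one_iff, QuotientGroup.mk_pow]
  exact pow_eq_one_of_mem_closure_range
    (fun _ _ => QuotientGroup.mul_comm_of_commutator_le le_rfl _ _)
    (fun i => (QuotientGroup.eq_one_iff _).2 (gen_pow_mem_commutator p lam i))
    (closure_range_mk_gen p lam ▸ mem_top _)

theorem finite_and_card_quotient_commutator_le [NeZero p] :
    Finite (JKGroup p lam ⧸ commutator (JKGroup p lam)) ∧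
      Nat.card (JKGroup p lam ⧸ commutator (JKGroup p lam)) ≤ p ^ 4 := by
  have h := finite_and_card_closure_range_le
    (f := fun i => (gen p lam i : JKGroup p lam ⧸ commutator (JKGroup p lam)))
    (fun _ _ => QuotientGroup.mul_comm_of_commutator_le le_rfl _ _) (NeZero.ne p)
    (fun i => (QuotientGroup.eq_one_iff _).2 (gen_pow_mem_commutator p lam i))
  rw [closure_range_mk_gen, card_top] at h
  have := h.1
  exact ⟨Finite.of_equiv _ topEquiv.toEquiv, h.2⟩

theorem finite_and_card_le [NeZero p] :
    Finite (JKGroup p lam) ∧ Nat.card (JKGroup p lam) ≤ p ^ 8 := by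
  obtain ⟨_, hK⟩ := finite_and_card_commutator_le p lam
  obtain ⟨_, hQ⟩ := finite_and_card_quotient_commutator_le p lam
  have hcard := card_eq_card_quotient_mul_card_subgroup (commutator (JKGroup p lam))
  refine ⟨Nat.finite_of_card_ne_zero ?_, ?_⟩
  · rw [hcard]
    exact mul_ne_zero Nat.card_pos.ne' Nat.card_pos.ne'
  · rw [hcard, show p ^ 8 = p ^ 4 * p ^ 4 by ring]
    exact Nat.mul_le_mul hQ hK

end JKGroup

structure AddCocycle (V W : Type*) [AddCommGroup V] [AddCommGroup W] where
  toFun : V → V → W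
  zero_left : ∀ b, toFun 0 b = 0
  zero_right : ∀ a, toFun a 0 = 0
  add_add : ∀ a b d, toFun a b + toFun (a + b) d = toFun b d + toFun a (b + d)

namespace AddCocycle

variable {V W : Type*} [AddCommGroup V] [AddCommGroup W]

instance : CoeFun (AddCocycle V W) fun _ => V → V → W := ⟨toFun⟩

@[ext]
structure Extension (c : AddCocycle V W) where
  fst : V
  snd : W

namespace Extension

open Subgroup

variable {c : AddCocycle V W}

instance : Group c.Extension where
  mul x y := ⟨x.fst + y.fst, x.snd + y.snd + c x.fst y.fst⟩
  one := ⟨0, 0⟩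
  inv x := ⟨-x.fst, -x.snd - c (-x.fst) x.fst⟩
  mul_assoc x y z := by
    ext
    · exact add_assoc _ _ _
    · change x.snd + y.snd + c x.fst y.fst + z.snd + c (x.fst + y.fst) z.fst =
        x.snd + (y.snd + z.snd + c y.fst z.fst) + c x.fst (y.fst + z.fst)
      have := c.add_add x.fst y.fst z.fst
      calc _ = x.snd + y.snd + z.snd + (c x.fst y.fst + c (x.fst + y.fst) z.fst) := by abel
        _ = _ := by rw [this]; abel
  one_mul x := by
    ext
    · exact zero_add _
    · change 0 + x.snd + c 0 x.fst = x.snd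
      rw [c.zero_left, zero_add, add_zero]
  mul_one x := by
    ext
    · exact add_zero _
    · change x.snd + 0 + c x.fst 0 = x.snd
      rw [c.zero_right, add_zero, add_zero]
  inv_mul_cancel x := by
    ext
    · exact neg_add_cancel _
    · change -x.snd - c (-x.fst) x.fst + x.snd + c (-x.fst) x.fst = 0
      abel

@[simp] theorem fst_mul (x y : c.Extension) : (x * y).fst = x.fst + y.fst := rfl
@[simp] theorem snd_mul (x y : c.Extension) : (x * y).snd = x.snd + y.snd + c x.fst y.fst := rfl
@[simp] theorem fst_one : (1 : c.Extension).fst = 0 := rfl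
@[simp] theorem snd_one : (1 : c.Extension).snd = 0 := rfl

@[simp] theorem fst_pow (x : c.Extension) (n : ℕ) : (x ^ n).fst = n • x.fst := by
  induction n with
  | zero => simp
  | succ n ih => rw [pow_succ, fst_mul, ih, succ_nsmul]

theorem mk_zero_pow (a : V) (n : ℕ) :
    (⟨a, 0⟩ : c.Extension) ^ n = ⟨n • a, ∑ k ∈ Finset.range n, c (k • a) a⟩ := by
  induction n with
  | zero => ext <;> simp
  | succ n ih =>
    rw [pow_succ, ih]
    ext
    · simp [succ_nsmul]
    · simp [Finset.sum_range_succ]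

def inr (w : W) : c.Extension := ⟨0, w⟩

theorem inr_mul_inr (v w : W) : (inr v : c.Extension) * inr w = inr (v + w) := by
  ext
  · simp [inr]
  · simp [inr, c.zero_left]

theorem inr_pow (w : W) (n : ℕ) : (inr w : c.Extension) ^ n = inr (n • w) := by
  induction n with
  | zero => ext <;> simp [inr]
  | succ n ih => rw [pow_succ, ih, inr_mul_inr, succ_nsmul]

theorem inr_eq_one_iff {w : W} : (inr w : c.Extension) = 1 ↔ w = 0 := by
  constructor
  · intro h; exact congrArg snd h
  · rintro rfl; rfl

theorem inr_mem_center (w : W) : (inr w : c.Extension) ∈ center c.Extension :=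
  mem_center_iff.2 fun x => by
    ext
    · simp [inr, add_comm]
    · simp [inr, c.zero_left, c.zero_right]; abel

theorem gcomm_eq (x y : c.Extension) : gcomm x y = inr (c x.fst y.fst - c y.fst x.fst) := by
  apply gcomm_eq_of_mul_eq
  ext
  · simp [inr, add_comm]
  · simp [inr, c.zero_right]; abel

theorem eq_mul_inr_of_fst_eq {x y : c.Extension} (h : x.fst = y.fst) :
    x = y * inr (x.snd - y.snd) := by
  ext
  · simp [inr, h]
  · simp [inr, c.zero_right]

theorem card : Nat.card c.Extension = Nat.card V * Nat.card W := by
  rw [← Nat.card_prod]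
  exact Nat.card_congr ⟨fun x => (x.fst, x.snd), fun v => ⟨v.1, v.2⟩, fun _ => rfl, fun _ => rfl⟩

end Extension

end AddCocycle

theorem Nat.div_add_mod_add_div (m d p : ℕ) : m / p + (m % p + d) / p = (m + d) / p := by
  rcases p.eq_zero_or_pos with rfl | hp
  · simp
  conv_rhs => rw [← Nat.mod_add_div m p, add_right_comm, Nat.add_mul_div_left _ _ hp]
  ring

section Carry

variable {p : ℕ}

/-- The cocycle of `ℤ/p²` as an extension of `ℤ/p` by `ℤ/p`, on the representatives
`0, …, p - 1`. -/
def carry (a b : ZMod p) : ℕ := (a.val + b.val) / p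

theorem carry_comm (a b : ZMod p) : carry a b = carry b a := by
  rw [carry, carry, add_comm]

theorem sum_range_carry (u : ZMod p) (n : ℕ) :
    ∑ k ∈ Finset.range n, carry (k • u) u = n * u.val / p := by
  induction n with
  | zero => simp
  | succ n ih =>
    rw [Finset.sum_range_succ, ih, carry, nsmul_eq_mul, ZMod.val_mul, ZMod.val_natCast,
      Nat.mod_mul_mod, Nat.div_add_mod_add_div, add_one_mul]

variable [NeZero p]

theorem carry_zero_left (b : ZMod p) : carry 0 b = 0 := by
  simp [carry, Nat.div_eq_of_lt (ZMod.val_lt b)]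

theorem carry_zero_right (a : ZMod p) : carry a 0 = 0 := by
  rw [carry_comm, carry_zero_left]

theorem carry_add_add (a b d : ZMod p) :
    carry a b + carry (a + b) d = carry b d + carry a (b + d) := by
  simp only [carry, ZMod.val_add]
  rw [Nat.div_add_mod_add_div, add_comm a.val ((b.val + d.val) % p), Nat.div_add_mod_add_div,
    add_comm (b.val + d.val), add_assoc]

end Carry

namespace JKModel

open Subgroup AddCocycle.Extension

variable (p : ℕ) (lam : ℕ × ℕ)

/-- The commutator pairing of the generators, in the coordinates
`[a₁,b₁], [a₁,b₂], [a₂,b₁], [a₂,b₂]` of the centre. -/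
def bilin (a b : Fin 4 → ZMod p) : Fin 4 → ZMod p := ![a 0 * b 2, a 0 * b 3, a 1 * b 2, a 1 * b 3]

/-- Row `i` holds the coordinates of the `p`-th power of the `i`-th generator. -/
def powVec : Fin 4 → Fin 4 → ZMod p :=
  ![![1, 0, 0, 0], ![lam.1, lam.2, 0, 0], ![0, 0, 1, 1], ![0, 0, 0, 1]]

variable {p}

theorem bilin_add_left (a a' b : Fin 4 → ZMod p) :
    bilin p (a + a') b = bilin p a b + bilin p a' b := by
  ext j; fin_cases j <;> simp [bilin] <;> ring

theorem bilin_add_right (a b b' : Fin 4 → ZMod p) :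
    bilin p a (b + b') = bilin p a b + bilin p a b' := by
  ext j; fin_cases j <;> simp [bilin] <;> ring

theorem bilin_zero_left (b : Fin 4 → ZMod p) : bilin p 0 b = 0 := by
  ext j; fin_cases j <;> simp [bilin]

theorem bilin_zero_right (a : Fin 4 → ZMod p) : bilin p a 0 = 0 := by
  ext j; fin_cases j <;> simp [bilin]

variable (p) [NeZero p]

def cocycle : AddCocycle (Fin 4 → ZMod p) (Fin 4 → ZMod p) where
  toFun a b := bilin p a b + ∑ i, carry (a i) (b i) • powVec p lam i
  zero_left b := by simp [bilin_zero_left, carry_zero_left]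
  zero_right a := by simp [bilin_zero_right, carry_zero_right]
  add_add a b d := by
    set K := fun x y : Fin 4 → ZMod p => ∑ i, carry (x i) (y i) • powVec p lam i
    have hK : K a b + K (a + b) d = K b d + K a (b + d) := by
      simp only [K, ← Finset.sum_add_distrib, ← add_smul, Pi.add_apply, carry_add_add]
    rw [bilin_add_left, bilin_add_right]
    calc _ = bilin p a b + bilin p a d + bilin p b d + (K a b + K (a + b) d) := by abel
      _ = _ := by rw [hK]; abel

abbrev Model := (cocycle p lam).Extension

def gen (i : Fin 4) : Model p lam := ⟨Pi.single i 1, 0⟩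

variable {p lam}

theorem gcomm_eq (x y : Model p lam) :
    gcomm x y = inr (bilin p x.fst y.fst - bilin p y.fst x.fst) := by
  rw [AddCocycle.Extension.gcomm_eq]
  congr 1
  change bilin p _ _ + _ - (bilin p _ _ + _) = _
  simp only [carry_comm (x.fst _)]
  abel

theorem gen_pow (i : Fin 4) : gen p lam i ^ p = inr (powVec p lam i) := by
  have hterm : ∀ k : ℕ, cocycle p lam (k • Pi.single i 1) (Pi.single i 1) =
      carry (k • (1 : ZMod p)) 1 • powVec p lam i := fun k => by
    have hbilin : bilin p (k • Pi.single i 1) (Pi.single i 1) = 0 := by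
      fin_cases i <;> ext j <;> fin_cases j <;> simp [bilin]
    change bilin p _ _ + _ = _
    rw [hbilin, zero_add, Finset.sum_eq_single i (fun j _ hj => by simp [hj, carry_zero_right])
      (by simp)]
    simp
  rw [gen, mk_zero_pow]
  ext1
  · ext j; simp [inr]
  · simp only [hterm, ← Finset.sum_smul, sum_range_carry, inr]
    rw [Nat.mul_div_cancel_left _ (Nat.pos_of_ne_zero (NeZero.ne p)),
      ← Nat.cast_smul_eq_nsmul (ZMod p), ZMod.natCast_zmod_val, one_smul]

theorem lift_eq_one : ∀ r ∈ jkRels p lam, FreeGroup.lift (gen p lam) r = 1 := by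
  rintro r (⟨i, j, k, rfl⟩ | hr)
  · simp only [map_gcomm, FreeGroup.lift_apply_of]
    rw [gcomm_eq (gen p lam i)]
    exact gcomm_eq_one_of_mem_center (inr_mem_center _) _
  simp only [Set.mem_insert_iff, Set.mem_singleton_iff] at hr
  rcases hr with rfl | rfl | rfl | rfl | rfl | rfl <;>
    simp only [map_mul, map_pow, map_inv, map_gcomm, FreeGroup.lift_apply_of, mul_inv_eq_one] <;>
    rw [gcomm_eq] <;> try rw [gen_pow]
  all_goals congr 1; ext j; fin_cases j <;> simp [bilin, powVec, gen]

theorem inr_mem_of_gcomm_gen_mem {H : Subgroup (Model p lam)}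
    (h : ∀ i j, gcomm (gen p lam i) (gen p lam j) ∈ H) (w : Fin 4 → ZMod p) : inr w ∈ H := by
  have hw : inr w =
      gcomm (gen p lam 0) (gen p lam 2) ^ (w 0).val *
        gcomm (gen p lam 0) (gen p lam 3) ^ (w 1).val *
        gcomm (gen p lam 1) (gen p lam 2) ^ (w 2).val *
        gcomm (gen p lam 1) (gen p lam 3) ^ (w 3).val := by
    simp only [gcomm_eq, inr_pow, inr_mul_inr]
    congr 1
    ext j; fin_cases j <;> simp [bilin, gen]
  rw [hw]
  exact mul_mem (mul_mem (mul_mem (pow_mem (h _ _) _) (pow_mem (h _ _) _)) (pow_mem (h _ _) _))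
    (pow_mem (h _ _) _)

theorem closure_range_gen : closure (Set.range (gen p lam)) = ⊤ := by
  refine eq_top_iff.2 fun x _ => ?_
  have hgen : ∀ i, gen p lam i ∈ closure (Set.range (gen p lam)) := fun i => subset_closure ⟨i, rfl⟩
  set y := gen p lam 0 ^ (x.fst 0).val * gen p lam 1 ^ (x.fst 1).val *
    gen p lam 2 ^ (x.fst 2).val * gen p lam 3 ^ (x.fst 3).val
  have hy : x.fst = y.fst := by
    ext j; fin_cases j <;> simp [y, gen, -ZMod.natCast_val, ZMod.natCast_zmod_val]
  rw [eq_mul_inr_of_fst_eq hy]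
  exact mul_mem (mul_mem (mul_mem (mul_mem (pow_mem (hgen 0) _) (pow_mem (hgen 1) _))
    (pow_mem (hgen 2) _)) (pow_mem (hgen 3) _))
    (inr_mem_of_gcomm_gen_mem (fun i j => gcomm_mem (hgen i) (hgen j)) _)

theorem fst_eq_zero_of_mem_center {x : Model p lam} (hx : x ∈ center (Model p lam)) :
    x.fst = 0 := by
  have h : ∀ i, bilin p x.fst (Pi.single i 1) - bilin p (Pi.single i 1) x.fst = 0 := fun i => by
    have hi := gcomm_eq x (gen p lam i)
    rw [gcomm_eq_one_iff.2 (mem_center_iff.1 hx _).symm] at hi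
    exact inr_eq_one_iff.1 hi.symm
  have h0 := congrFun (h 0)
  have h2 := congrFun (h 2)
  ext j; fin_cases j
  · simpa [bilin] using h2 0
  · simpa [bilin] using h2 2
  · simpa [bilin] using h0 0
  · simpa [bilin] using h0 1

theorem center_le_commutator : center (Model p lam) ≤ commutator (Model p lam) := fun x hx => by
  rw [eq_mul_inr_of_fst_eq (y := 1) (fst_eq_zero_of_mem_center hx), one_mul]
  exact inr_mem_of_gcomm_gen_mem (fun i j => gcomm_mem_commutator _ _) _

theorem card : Nat.card (Model p lam) = p ^ 8 := by
  simp [AddCocycle.Extension.card]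
  ring

end JKModel

theorem Nat.eq_and_eq_of_mul_eq_mul_of_le {a b q : ℕ} (ha : a ≤ q) (hb : b ≤ q)
    (h : a * b = q * q) : a = q ∧ b = q := by
  constructor <;> nlinarith [Nat.mul_le_mul_left a hb, Nat.mul_le_mul_right b ha]

namespace JKGroup

open Subgroup

variable (p : ℕ) (lam : ℕ × ℕ) [NeZero p]

def toModel : JKGroup p lam →* JKModel.Model p lam := PresentedGroup.toGroup JKModel.lift_eq_one

theorem toModel_surjective : Function.Surjective (toModel p lam) := by
  rw [← MonoidHom.range_eq_top, eq_top_iff, ← JKModel.closure_range_gen, closure_le]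
  rintro _ ⟨i, rfl⟩
  exact ⟨gen p lam i, PresentedGroup.toGroup.of _⟩

theorem card_eq : Nat.card (JKGroup p lam) = p ^ 8 := by
  obtain ⟨_, hle⟩ := finite_and_card_le p lam
  refine hle.antisymm ?_
  rw [← JKModel.card (lam := lam)]
  exact Nat.card_le_card_of_surjective _ (toModel_surjective p lam)

theorem toModel_bijective : Function.Bijective (toModel p lam) := by
  have := (finite_and_card_le p lam).1
  exact (toModel_surjective p lam).bijective_of_nat_card_le (by rw [card_eq, JKModel.card])

theorem center_eq_commutator : center (JKGroup p lam) = commutator (JKGroup p lam) :=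
  le_antisymm (center_le_commutator_of_bijective (toModel_bijective p lam)
    JKModel.center_le_commutator) (commutator_le_center p lam)

theorem card_quotient_commutator_and_commutator :
    Nat.card (JKGroup p lam ⧸ commutator (JKGroup p lam)) = p ^ 4 ∧
      Nat.card (commutator (JKGroup p lam)) = p ^ 4 :=
  Nat.eq_and_eq_of_mul_eq_mul_of_le (finite_and_card_quotient_commutator_le p lam).2
    (finite_and_card_commutator_le p lam).2
    (by rw [← card_eq_card_quotient_mul_card_subgroup, card_eq]; ring)

end JKGroup

theorem stmt_2_general (p : ℕ) (hp : p.Prime) (lam : ℕ × ℕ) :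
    Nat.card (JKGroup p lam) = p ^ 8 ∧
    Subgroup.center (JKGroup p lam) = commutator (JKGroup p lam) ∧
    Nat.card (Subgroup.center (JKGroup p lam)) = p ^ 4 ∧
    (∀ z ∈ Subgroup.center (JKGroup p lam), z ^ p = 1) ∧
    (∀ g : JKGroup p lam, g ^ p ∈ Subgroup.center (JKGroup p lam)) ∧
    Nat.card (JKGroup p lam ⧸ Subgroup.center (JKGroup p lam)) = p ^ 4 ∧
    (∀ x y : JKGroup p lam ⧸ Subgroup.center (JKGroup p lam), x * y = y * x) ∧
    (∀ x : JKGroup p lam ⧸ Subgroup.center (JKGroup p lam), x ^ p = 1) := by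
  have : NeZero p := ⟨hp.ne_zero⟩
  have hZ := JKGroup.center_eq_commutator p lam
  have hpow : ∀ g : JKGroup p lam, g ^ p ∈ Subgroup.center (JKGroup p lam) :=
    hZ ▸ JKGroup.pow_mem_commutator p lam
  obtain ⟨hQ, hK⟩ := JKGroup.card_quotient_commutator_and_commutator p lam
  refine ⟨JKGroup.card_eq p lam, hZ, hZ ▸ hK,
    hZ ▸ fun z hz => JKGroup.pow_eq_one_of_mem_commutator p lam hz, hpow, hZ ▸ hQ,
    QuotientGroup.mul_comm_of_commutator_le hZ.ge, QuotientGroup.pow_eq_one_of_forall_pow_mem hpow⟩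

theorem stmt_2 (p : ℕ) (hp : p.Prime) (lam : ℕ × ℕ)
    (hlam : lam = (1, 0) ∨ (lam.1 ≤ p - 1 ∧ lam.2 = 1)) :
    Nat.card (JKGroup p lam) = p ^ 8 ∧
    Subgroup.center (JKGroup p lam) = commutator (JKGroup p lam) ∧
    Nat.card (Subgroup.center (JKGroup p lam)) = p ^ 4 ∧
    (∀ z ∈ Subgroup.center (JKGroup p lam), z ^ p = 1) ∧
    (∀ g : JKGroup p lam, g ^ p ∈ Subgroup.center (JKGroup p lam)) ∧
    Nat.card (JKGroup p lam ⧸ Subgroup.center (JKGroup p lam)) = p ^ 4 ∧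
    (∀ x y : JKGroup p lam ⧸ Subgroup.center (JKGroup p lam), x * y = y * x) ∧
    (∀ x : JKGroup p lam ⧸ Subgroup.center (JKGroup p lam), x ^ p = 1) :=
  stmt_2_general p hp lam
end

section
/- Let p be a prime and G a finite p-group such that every automorphism of G commutes with every endomorphism of G under composition (α ∘ φ = φ ∘ α for all α ∈ Aut(G), φ ∈ End(G)). Then: (a) the range of every endomorphism of G is a characteristic subgroup of G; (b) every cyclic subgroup of G whose order divides the exponent of the abelianization G/[G,G] is a characteristic subgroup of G; and (c) every element g ∈ G with g^p = 1 lies in the center Z(G). -/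
/-!
Ranges of endomorphisms are characteristic because `α(φ(G)) = φ(α(G)) = φ(G)`. A cyclic
subgroup `H` whose order divides the exponent of `G/[G,G]` is itself such a range: the
abelianization is a product of cyclic `p`-groups, one factor has order divisible by `|H|`,
so `G` maps onto `H`. For `g` of order `p` this applies to `⟨g⟩`, since a nontrivial
`p`-group has a nontrivial abelianization; and an endomorphism `φ` with abelian range that
commutes with inner automorphisms is central, as
`x φ(y) x⁻¹ = φ(x y x⁻¹) = φ(x) φ(y) φ(x)⁻¹ = φ(y)`.
-/

theorem Nat.Prime.exists_pow_dvd_of_pow_dvd_finset_lcm {ι : Type*} {p m : ℕ} (hp : p.Prime)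
    (hm : m ≠ 0) {s : Finset ι} {f : ι → ℕ} (hf : ∀ i ∈ s, f i ≠ 0) (h : p ^ m ∣ s.lcm f) :
    ∃ i ∈ s, p ^ m ∣ f i := by
  have hlcm : s.lcm f ≠ 0 := by
    simpa only [Ne, Finset.lcm_eq_zero_iff, not_exists, not_and] using hf
  rw [hp.pow_dvd_iff_le_factorization hlcm, Finset.factorization_lcm hf,
    Finset.le_sup_iff (Nat.pos_of_ne_zero hm)] at h
  obtain ⟨i, hi, hmi⟩ := h
  exact ⟨i, hi, (hp.pow_dvd_iff_le_factorization (hf i hi)).mpr hmi⟩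

theorem IsPGroup.exists_surjective_zmod_of_dvd_exponent {p : ℕ} (hp : p.Prime) {A : Type*}
    [CommGroup A] [Finite A] (hA : IsPGroup p A) {n : ℕ} (hn : n ∣ Monoid.exponent A) :
    ∃ f : A →* Multiplicative (ZMod n), Function.Surjective f := by
  obtain ⟨k, hk⟩ := hA.exists_exponent_dvd_pow
  obtain ⟨m, -, rfl⟩ := (Nat.dvd_prime_pow hp).mp (hn.trans hk)
  rcases eq_or_ne m 0 with rfl | hm
  · rw [pow_zero]
    exact ⟨1, Function.surjective_to_subsingleton _⟩
  obtain ⟨ι, _, n, hn1, ⟨e⟩⟩ := CommGroup.equiv_prod_multiplicative_zmod_of_finite A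
  rw [Monoid.exponent_eq_of_mulEquiv e, Monoid.exponent_pi] at hn
  simp only [Monoid.exponent_multiplicative, ZMod.exponent] at hn
  obtain ⟨i, -, hi⟩ := hp.exists_pow_dvd_of_pow_dvd_finset_lcm hm
    (fun i _ => (Nat.zero_lt_one.trans (hn1 i)).ne') hn
  refine ⟨(ZMod.castHom hi (ZMod (p ^ m))).toAddMonoidHom.toMultiplicative.comp
    ((Pi.evalMonoidHom _ i).comp e.toMonoidHom), ?_⟩
  exact (ZMod.castHom_surjective hi).comp ((Function.surjective_eval i).comp e.surjective)

theorem IsPGroup.exists_range_eq_of_dvd_exponent_abelianization {p : ℕ} (hp : p.Prime)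
    {G : Type*} [Group G] [Finite G] (hG : IsPGroup p G) (H : Subgroup G) [IsCyclic H]
    (hH : Nat.card H ∣ Monoid.exponent (Abelianization G)) :
    ∃ φ : G →* G, φ.range = H := by
  obtain ⟨f, hf⟩ := (hG.to_quotient _).exists_surjective_zmod_of_dvd_exponent hp hH
  refine ⟨H.subtype.comp ((zmodCyclicMulEquiv ‹_›).toMonoidHom.comp
    (f.comp Abelianization.of)), ?_⟩
  rw [MonoidHom.range_comp, MonoidHom.range_eq_top.mpr, ← MonoidHom.range_eq_map,
    Subgroup.range_subtype]
  exact (zmodCyclicMulEquiv ‹_›).surjective.comp (hf.comp (QuotientGroup.mk'_surjective _))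

theorem MonoidHom.range_characteristic_of_forall_comp_comm {G : Type*} [Group G]
    (φ : G →* G) (h : ∀ α : MulAut G, α.toMonoidHom.comp φ = φ.comp α.toMonoidHom) :
    φ.range.Characteristic := by
  rw [Subgroup.characteristic_iff_map_eq]
  intro α
  rw [MonoidHom.map_range, h α, MonoidHom.range_comp,
    MonoidHom.range_eq_top.mpr α.surjective, ← MonoidHom.range_eq_map]

theorem MonoidHom.range_le_center_of_forall_conj_comm {G : Type*} [Group G] (φ : G →* G)
    [IsMulCommutative φ.range]
    (h : ∀ x : G, (MulAut.conj x).toMonoidHom.comp φ = φ.comp (MulAut.conj x).toMonoidHom) :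
    φ.range ≤ Subgroup.center G := by
  rintro _ ⟨y, rfl⟩
  rw [Subgroup.mem_center_iff]
  intro x
  have hx := DFunLike.congr_fun (h x) y
  simp only [MonoidHom.comp_apply, MulEquiv.coe_toMonoidHom, MulAut.conj_apply, map_mul,
    map_inv] at hx
  rw [setLike_mul_comm (MonoidHom.mem_range.mpr ⟨x, rfl⟩)
    (MonoidHom.mem_range.mpr ⟨y, rfl⟩), mul_inv_cancel_right] at hx
  exact mul_inv_eq_iff_eq_mul.mp hx

theorem IsPGroup.prime_dvd_exponent_abelianization {p : ℕ} [Fact p.Prime] {G : Type*} [Group G]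
    [Finite G] [Nontrivial G] (hG : IsPGroup p G) :
    p ∣ Monoid.exponent (Abelianization G) := by
  have := hG.isNilpotent
  have : Nontrivial (Abelianization G) := QuotientGroup.nontrivial_iff.mpr
    (Group.IsSolvable.commutator_lt_top_of_nontrivial G).ne
  obtain ⟨k, hk, hcard⟩ := (hG.to_quotient _).nontrivial_iff_card.mp this
  obtain ⟨a, ha⟩ := exists_prime_orderOf_dvd_card' (G := Abelianization G) p
    (hcard ▸ dvd_pow_self p hk.ne')
  exact ha ▸ Monoid.order_dvd_exponent a

theorem stmt_11 (p : ℕ) (hp : p.Prime) (G : Type*) [Group G] [Finite G]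
    (hpG : IsPGroup p G)
    (hcomm : ∀ (α : MulAut G) (φ : G →* G),
      α.toMonoidHom.comp φ = φ.comp α.toMonoidHom) :
    (∀ φ : G →* G, φ.range.Characteristic) ∧
    (∀ H : Subgroup G, IsCyclic H → Nat.card H ∣ Monoid.exponent (Abelianization G) →
      H.Characteristic) ∧
    (∀ g : G, g ^ p = 1 → g ∈ Subgroup.center G) := by
  have range_char (φ : G →* G) := φ.range_characteristic_of_forall_comp_comm (hcomm · φ)
  refine ⟨range_char, fun H _ hH => ?_, fun g hg => ?_⟩
  · obtain ⟨φ, rfl⟩ := hpG.exists_range_eq_of_dvd_exponent_abelianization hp H hH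
    exact range_char φ
  · rcases eq_or_ne g 1 with rfl | hg1
    · exact Subgroup.one_mem _
    have := Fact.mk hp
    have : Nontrivial G := ⟨⟨g, 1, hg1⟩⟩
    have hcard : Nat.card (Subgroup.zpowers g) ∣ Monoid.exponent (Abelianization G) := by
      rw [Nat.card_zpowers, orderOf_eq_prime hg hg1]
      exact hpG.prime_dvd_exponent_abelianization
    obtain ⟨φ, hφ⟩ := hpG.exists_range_eq_of_dvd_exponent_abelianization hp _ hcard
    have : IsMulCommutative φ.range := hφ ▸ inferInstance
    exact φ.range_le_center_of_forall_conj_comm (fun x => hcomm _ φ) (hφ ▸ Subgroup.mem_zpowers g)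
end

section
/- Let p be a prime and G a finite p-group such that every automorphism of G commutes with every endomorphism of G under composition. Then G cannot be written as a nontrivial internal semidirect product: there do not exist subgroups N, H of G with N normal in G, N ≠ {1}, H ≠ {1}, N ∩ H = {1}, and N·H = G. -/
/-!
Suppose `G = N ⋊ H` nontrivially and let `π` be the projection of `G` onto `H` with kernel `N`,
an endomorphism of `G`. Conjugation by `n ∈ N` commutes with `π` only if `n` centralizes `H`,
so `G = N × H`. Then an element `z` of order `p` in the center of `N` is central in `G`, and
since the `p`-group `H` has a quotient of order `p`, there is a homomorphism `ψ : H → ⟨z⟩` hitting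
`z`. The central automorphism `g ↦ g * ψ (π g)` sends some `h ∈ H` to `h * z`, while `π` kills `z`,
so it does not commute with `π`.
-/

open Subgroup

namespace MulAut

variable {G : Type*} [Group G]

def ofCentralHom (f : G →* G) (hcen : ∀ g, f g ∈ center G) (hff : ∀ g, f (f g) = 1) :
    MulAut G where
  toFun g := g * f g
  invFun g := g * (f g)⁻¹
  left_inv g := by simp [hff]
  right_inv g := by simp [hff]
  map_mul' x y := by
    rw [map_mul, mul_assoc x, ← mul_assoc y, mem_center_iff.mp (hcen x) y]
    group

@[simp]
theorem ofCentralHom_apply (f : G →* G) (hcen : ∀ g, f g ∈ center G) (hff : ∀ g, f (f g) = 1)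
    (g : G) : ofCentralHom f hcen hff g = g * f g :=
  rfl

end MulAut

namespace Subgroup

variable {G : Type*} [Group G] {H K : Subgroup G}

theorem isComplement'_of_inf_eq_bot_of_forall_exists_mul (hHK : H ⊓ K = ⊥)
    (hmul : ∀ g : G, ∃ h ∈ H, ∃ k ∈ K, g = h * k) : H.IsComplement' K :=
  isComplement'_of_disjoint_and_mul_eq_univ (disjoint_iff.mpr hHK) <|
    Set.eq_univ_of_forall fun g ↦ by
      obtain ⟨h, hh, k, hk, rfl⟩ := hmul g
      exact Set.mul_mem_mul hh hk

namespace IsComplement'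

theorem mem_center_of_forall_commute (e : H.IsComplement' K) {z : G}
    (hH : ∀ h : H, Commute z h) (hK : ∀ k : K, Commute z k) : z ∈ center G := by
  refine mem_center_iff.mpr fun g ↦ ?_
  obtain ⟨⟨h, k⟩, rfl⟩ := e.2 g
  exact ((hH h).mul_right (hK k)).symm.eq

variable [K.Normal]

noncomputable def projection (e : H.IsComplement' K) : G →* H :=
  e.QuotientMulEquiv.toMonoidHom.comp (QuotientGroup.mk' K)

theorem projection_apply_of_mem_right (e : H.IsComplement' K) {k : G} (hk : k ∈ K) :
    e.projection k = 1 := by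
  simp only [projection, MonoidHom.comp_apply, QuotientGroup.mk'_apply,
    (QuotientGroup.eq_one_iff k).mpr hk, map_one]

@[simp]
theorem projection_coe (e : H.IsComplement' K) (h : H) : e.projection h = h := by
  have : e.QuotientMulEquiv.symm h = (h : G ⧸ K) := by
    simp [IsComplement.leftQuotientEquiv]
  simp [projection, ← this]

theorem commute_of_conj_comp_projection (e : H.IsComplement' K) {k : G} (hk : k ∈ K)
    (hc : (MulAut.conj k).toMonoidHom.comp (H.subtype.comp e.projection) =
      (H.subtype.comp e.projection).comp (MulAut.conj k).toMonoidHom)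
    (h : H) : Commute k h := by
  have := DFunLike.congr_fun hc (h : G)
  simp only [MonoidHom.comp_apply, MulEquiv.coe_toMonoidHom, MulAut.conj_apply, map_mul, map_inv,
    e.projection_apply_of_mem_right hk, e.projection_coe, map_one, one_mul, inv_one, mul_one,
    coe_subtype] at this
  exact mul_inv_eq_iff_eq_mul.mp this

theorem exists_mulAut_comp_projection_ne (e : H.IsComplement' K) (ψ : H →* G)
    (hψ : ∀ h, ψ h ∈ center G ⊓ K) {h₁ : H} (hh₁ : ψ h₁ ≠ 1) :
    ∃ α : MulAut G, α.toMonoidHom.comp (H.subtype.comp e.projection) ≠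
      (H.subtype.comp e.projection).comp α.toMonoidHom := by
  let f := ψ.comp e.projection
  have hff (g : G) : f (f g) = 1 := by
    simp [f, e.projection_apply_of_mem_right (hψ _).2]
  refine ⟨MulAut.ofCentralHom f (fun g ↦ (hψ _).1) hff, fun hα ↦ hh₁ ?_⟩
  simpa [f, e.projection_apply_of_mem_right (hψ _).2] using DFunLike.congr_fun hα (h₁ : G)

end IsComplement'

theorem exists_monoidHom_apply_eq_of_index_eq_prime {K : Type*} [Group K] {p : ℕ}
    [Fact p.Prime] (M : Subgroup G) [M.Normal] (hM : M.index = p) {z : K} (hz : z ^ p = 1) :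
    ∃ ψ : G →* K, ∃ g, ψ g = z := by
  have hcard : Nat.card (G ⧸ M) = p := by rw [← index_eq_card, hM]
  have := isCyclic_of_prime_card hcard
  obtain ⟨c, hc⟩ := IsCyclic.exists_generator (α := G ⧸ M)
  have hdvd : orderOf z ∣ orderOf c := by
    rw [orderOf_eq_card_of_forall_mem_zpowers hc, hcard]
    exact orderOf_dvd_of_pow_eq_one hz
  obtain ⟨g, rfl⟩ := QuotientGroup.mk'_surjective M c
  exact ⟨(monoidHomOfForallMemZpowers hc hdvd).comp (QuotientGroup.mk' M), g,
    monoidHomOfForallMemZpowers_apply_gen hc hdvd⟩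

end Subgroup

namespace IsPGroup

variable {p : ℕ} [Fact p.Prime] {G : Type*} [Group G] [Finite G] [Nontrivial G]

theorem exists_mem_center_orderOf_eq (hG : IsPGroup p G) : ∃ z ∈ center G, orderOf z = p := by
  have := hG.center_nontrivial
  obtain ⟨ζ, hζ⟩ := exists_prime_orderOf_dvd_card' (G := center G) p
    ((hG.to_subgroup _).card_eq_or_dvd.resolve_left Finite.one_lt_card.ne')
  exact ⟨ζ, ζ.2, (orderOf_coe ζ).trans hζ⟩

theorem exists_normal_index_eq (hG : IsPGroup p G) : ∃ M : Subgroup G, M.Normal ∧ M.index = p := by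
  obtain ⟨n, hn, hcard⟩ := hG.nontrivial_iff_card.mp ‹_›
  obtain ⟨M, hM⟩ := Sylow.exists_subgroup_card_pow_prime p (n := n - 1)
    (hcard ▸ pow_dvd_pow p (n.sub_le 1))
  have hindex : M.index = p := by
    have h := M.card_mul_index
    rw [hM, hcard, ← Nat.sub_add_cancel hn, pow_succ, Nat.add_sub_cancel] at h
    exact Nat.eq_of_mul_eq_mul_left (pow_pos (Fact.out : p.Prime).pos _) h
  refine ⟨M, normal_of_index_eq_minFac_card ?_, hindex⟩
  rw [hindex, hcard, Nat.Prime.pow_minFac Fact.out hn.ne']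

theorem exists_monoidHom_apply_eq {K : Type*} [Group K] (hG : IsPGroup p G) {z : K}
    (hz : z ^ p = 1) : ∃ ψ : G →* K, ∃ g, ψ g = z :=
  let ⟨M, _, hM⟩ := hG.exists_normal_index_eq
  M.exists_monoidHom_apply_eq_of_index_eq_prime hM hz

end IsPGroup

theorem stmt_13 (p : ℕ) (hp : p.Prime) (G : Type*) [Group G] [Finite G]
    (hpG : IsPGroup p G)
    (hcomm : ∀ (α : MulAut G) (φ : G →* G),
      α.toMonoidHom.comp φ = φ.comp α.toMonoidHom) :
    ¬ ∃ N H : Subgroup G, N.Normal ∧ N ≠ ⊥ ∧ H ≠ ⊥ ∧ N ⊓ H = ⊥ ∧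
      (∀ g : G, ∃ n ∈ N, ∃ h ∈ H, g = n * h) := by
  have : Fact p.Prime := ⟨hp⟩
  rintro ⟨N, H, hN, hNbot, hHbot, hNH, hgen⟩
  have e : H.IsComplement' N := (isComplement'_of_inf_eq_bot_of_forall_exists_mul hNH hgen).symm
  have : Nontrivial N := N.nontrivial_iff_ne_bot.mpr hNbot
  obtain ⟨ζ, hζ, hζ_order⟩ := (hpG.to_subgroup N).exists_mem_center_orderOf_eq
  set z : G := ζ.1
  have hz : z ∈ center G ⊓ N := by
    refine ⟨e.mem_center_of_forall_commute (e.commute_of_conj_comp_projection ζ.2 (hcomm _ _))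
      fun n ↦ ?_, ζ.2⟩
    exact (congrArg Subtype.val (mem_center_iff.mp hζ n)).symm
  have hz_order : orderOf z = p := (orderOf_coe ζ).trans hζ_order
  have : Nontrivial H := H.nontrivial_iff_ne_bot.mpr hHbot
  obtain ⟨ψ, h₁, hψ⟩ := (hpG.to_subgroup H).exists_monoidHom_apply_eq
    (z := (⟨z, mem_zpowers z⟩ : zpowers z)) (Subtype.ext (hz_order ▸ pow_orderOf_eq_one z))
  obtain ⟨α, hα⟩ := e.exists_mulAut_comp_projection_ne ((zpowers z).subtype.comp ψ)
    (fun h ↦ zpowers_le.mpr hz (ψ h).2) (h₁ := h₁) <| by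
      simpa [hψ] using fun (hz1 : z = 1) ↦ hp.one_lt.ne' (hz_order ▸ hz1 ▸ orderOf_one)
  exact hα (hcomm α _)
end
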